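/- Suppose c > c_⋆, where c_⋆ = -1 - x_⋆ - e^{x_⋆} and x_⋆ is the unique positive solution of x e^x/(1+e^x) = 1. Let U = (U₁,…,U_n) be a vector of i.i.d. Uniform(0,1) random variables. Then there exist constants ε_c > 0 and γ_c ∈ [0,1) (depending only on c) such that for every positive integer n and all x, x' ∈ Ω_n: E|f_{c,n}(x;U) − f_{c,n}(x';U)| ≤ min{|c|/4, γ_c}·|x − x'| if both x and x' lie in [x_c^* − ε_c, x_c^* + ε_c], and E|f_{c,n}(x;U) − f_{c,n}(x';U)| ≤ (|c|/4)·|x − x'| in all cases. -/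

import Mathlib

open Real MeasureTheory

noncomputable def sigmoid (x : ℝ) : ℝ := Real.exp x / (1 + Real.exp x)

lemma one_add_exp_pos (t : ℝ) : 0 < 1 + Real.exp t := by positivity

lemma sigmoid_pos (t : ℝ) : 0 < _root_.sigmoid t := by
  unfold _root_.sigmoid; positivity

lemma sigmoid_lt_one (t : ℝ) : _root_.sigmoid t < 1 := by
  unfold _root_.sigmoid
  rw [div_lt_one (one_add_exp_pos t)]
  linarith

lemma hasDerivAt_sigmoid (t : ℝ) :
    HasDerivAt _root_.sigmoid (_root_.sigmoid t * (1 - _root_.sigmoid t)) t := by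
  have h : HasDerivAt (fun x => Real.exp x / (1 + Real.exp x))
      ((Real.exp t * (1 + Real.exp t) - Real.exp t * (0 + Real.exp t)) / (1 + Real.exp t)^2) t :=
    (Real.hasDerivAt_exp t).div ((hasDerivAt_const t 1).add (Real.hasDerivAt_exp t))
      (ne_of_gt (one_add_exp_pos t))
  convert h using 1
  · rfl
  unfold _root_.sigmoid
  field_simp
  ring

lemma sigmoid_one_sub (t : ℝ) : 1 - _root_.sigmoid t = 1 / (1 + Real.exp t) := by
  unfold _root_.sigmoid
  field_simp
  ring

noncomputable def mc (c x : ℝ) : ℝ := _root_.sigmoid (c * x)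

lemma hasDerivAt_mc (c x : ℝ) :
    HasDerivAt (mc c) (c * (_root_.sigmoid (c * x) * (1 - _root_.sigmoid (c * x)))) x := by
  have h := (_root_.hasDerivAt_sigmoid (c * x)).comp x ((hasDerivAt_id x).const_mul c)
  exact h.congr_deriv (by ring)

lemma sigmoid_deriv_le (t : ℝ) : _root_.sigmoid t * (1 - _root_.sigmoid t) ≤ 1 / 4 := by
  nlinarith [sq_nonneg (_root_.sigmoid t - 1/2)]

lemma sigmoid_deriv_nonneg (t : ℝ) : 0 ≤ _root_.sigmoid t * (1 - _root_.sigmoid t) :=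
  mul_nonneg (_root_.sigmoid_pos t).le (by linarith [_root_.sigmoid_lt_one t])

/-- global Lipschitz bound for mc with constant |c|/4 -/
lemma mc_lipschitz (c x y : ℝ) : |mc c x - mc c y| ≤ (|c| / 4) * |x - y| := by
  have := Convex.norm_image_sub_le_of_norm_hasDerivWithin_le
    (f := mc c) (f' := fun z => c * (_root_.sigmoid (c * z) * (1 - _root_.sigmoid (c * z))))
    (s := Set.univ) (C := |c| / 4)
    (fun z _ => (hasDerivAt_mc c z).hasDerivWithinAt)
    (fun z _ => by
      rw [Real.norm_eq_abs, abs_mul, abs_of_nonneg (sigmoid_deriv_nonneg _)]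
      calc |c| * (_root_.sigmoid (c*z) * (1 - _root_.sigmoid (c*z))) ≤ |c| * (1/4) :=
            mul_le_mul_of_nonneg_left (sigmoid_deriv_le _) (abs_nonneg c)
        _ = |c| / 4 := by ring)
    convex_univ (Set.mem_univ y) (Set.mem_univ x)
  simpa [Real.norm_eq_abs] using this

/-- The key inequality: derivative of mc at fixed point has modulus < 1. -/
lemma key_lt_one (xs c xc : ℝ)
    (hxs : 0 < xs ∧ xs * Real.exp xs / (1 + Real.exp xs) = 1)
    (hc : c > -1 - xs - Real.exp xs)
    (hxc : mc c xc = xc) : |c| * (xc * (1 - xc)) < 1 := by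
  have hfix : _root_.sigmoid (c * xc) = xc := hxc
  have hxc0 : 0 < xc := hfix ▸ _root_.sigmoid_pos (c * xc)
  have hxc1 : xc < 1 := hfix ▸ _root_.sigmoid_lt_one (c * xc)
  set t := c * xc with ht
  have hE : 0 < Real.exp t := Real.exp_pos t
  have hx_eq : xc * (1 + Real.exp t) = Real.exp t := by
    have h1 : (0:ℝ) < 1 + Real.exp t := one_add_exp_pos t
    rw [_root_.sigmoid] at hfix
    field_simp at hfix
    linarith [hfix]
  rcases le_or_gt 0 c with hc0 | hc0
  · -- nonnegative case: c * xc * (1 - xc) = t / (1 + e^t) < 1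
    rw [abs_of_nonneg hc0]
    have ht0 : 0 ≤ t := mul_nonneg hc0 hxc0.le
    have hexp : t + 1 ≤ Real.exp t := Real.add_one_le_exp t
    nlinarith [one_add_exp_pos t]
  · -- negative case
    rw [abs_of_neg hc0]
    set s := -t with hs
    have hs0 : 0 < s := by
      have : t < 0 := mul_neg_of_neg_of_pos hc0 hxc0
      simpa [hs] using neg_pos.2 this
    set S := Real.exp s with hSdef
    have hS1 : 0 < S := Real.exp_pos s
    have hEt : Real.exp t * S = 1 := by
      rw [hSdef, ← Real.exp_add]; simp [hs]
    -- xc * (1 + S) = 1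
    have hxS : xc * (1 + S) = 1 := by
      have := hx_eq
      have h2 : xc * (1 + Real.exp t) * S = Real.exp t * S := by rw [this]
      nlinarith [hE]
    -- -c = s * (1 + S)
    have hncs : s = -c * xc := by rw [hs, ht]; ring
    have hnc : -c = s * (1 + S) := by linear_combination c * hxS - (1 + S) * hncs
    set X := Real.exp xs with hXdef
    have hX1 : 0 < X := Real.exp_pos xs
    have hxsX : xs * X = 1 + X := by
      have h := hxs.2
      have h1 : (0:ℝ) < 1 + X := by linarith
      field_simp [hXdef] at h
      linarith
    -- from hc : -c < 1 + xs + X = xs * (1 + X)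
    have hclt : s * (1 + S) < xs * (1 + X) := by
      rw [← hnc]
      have h2 : -c < 1 + xs + X := by rw [hXdef]; linarith [hc]
      nlinarith [hxsX]
    -- monotonicity: s < xs
    have hslt : s < xs := by
      by_contra hle
      push_neg at hle
      have hSX : X ≤ S := by rw [hXdef, hSdef]; exact Real.exp_le_exp.2 hle
      nlinarith [hxs.1, hX1]
    have hSX : S < X := by rw [hXdef, hSdef]; exact Real.exp_lt_exp.2 hslt
    -- s * S < 1 + S
    have hsS : s * S < 1 + S := by
      have hp1 : s * S < xs * X := by
        apply mul_lt_mul'' hslt hSX hs0.le hS1.le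
      have hp2 : 0 < (xs - s) * (X * S) :=
        mul_pos (sub_pos.2 hslt) (mul_pos hX1 hS1)
      nlinarith [hxsX, hX1, hS1]
    have h1S : (0:ℝ) < 1 + S := by linarith
    have h1mxc : (1 - xc) * (1 + S) = S := by linarith [hxS]
    rw [hnc]
    have e1 : s * (1 + S) * (xc * (1 - xc)) = s * (1 - xc) := by
      have : s * (1 + S) * (xc * (1 - xc)) = s * (1 - xc) * (xc * (1 + S)) := by ring
      rw [this, hxS, mul_one]
    rw [e1]
    have e2 : s * (1 - xc) * (1 + S) = s * S := by
      rw [mul_assoc, h1mxc]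
    exact (mul_lt_mul_iff_of_pos_right h1S).1 (by rw [e2]; linarith [hsS])

lemma continuous_sigmoid' : Continuous _root_.sigmoid :=
  Real.continuous_exp.div (continuous_const.add Real.continuous_exp)
    (fun x => ne_of_gt (one_add_exp_pos x))

lemma exists_eps_gamma (xs c xc : ℝ)
    (hxs : 0 < xs ∧ xs * Real.exp xs / (1 + Real.exp xs) = 1)
    (hc : c > -1 - xs - Real.exp xs)
    (hxc : mc c xc = xc) :
    ∃ εc > (0:ℝ), ∃ γc : ℝ, 0 ≤ γc ∧ γc < 1 ∧
      ∀ x y : ℝ, x ∈ Set.Icc (xc - εc) (xc + εc) → y ∈ Set.Icc (xc - εc) (xc + εc) →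
        |mc c x - mc c y| ≤ γc * |x - y| := by
  set D : ℝ → ℝ := fun y => |c| * (_root_.sigmoid (c * y) * (1 - _root_.sigmoid (c * y))) with hD
  have hDcont : Continuous D := by
    apply continuous_const.mul
    exact ((continuous_sigmoid'.comp (continuous_const.mul continuous_id)).mul
      (continuous_const.sub (continuous_sigmoid'.comp (continuous_const.mul continuous_id))))
  have hDxc : D xc < 1 := by
    have := key_lt_one xs c xc hxs hc hxc
    have hfix : _root_.sigmoid (c * xc) = xc := hxc
    simp only [hD, hfix]
    exact this
  have hDnonneg : ∀ y, 0 ≤ D y := fun y =>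
    mul_nonneg (abs_nonneg c) (sigmoid_deriv_nonneg _)
  set γc : ℝ := (1 + D xc) / 2 with hγ
  have hγ0 : 0 ≤ γc := by have := hDnonneg xc; positivity
  have hγ1 : γc < 1 := by simp only [hγ]; linarith
  have hDγ : D xc < γc := by simp only [hγ]; linarith
  have hev : ∀ᶠ y in nhds xc, D y < γc :=
    (hDcont.continuousAt).eventually_lt continuousAt_const hDγ
  rw [Metric.eventually_nhds_iff] at hev
  obtain ⟨ε, hε0, hε⟩ := hev
  refine ⟨ε / 2, by positivity, γc, hγ0, hγ1, fun x y hx hy => ?_⟩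
  have hsub : ∀ z ∈ Set.Icc (xc - ε/2) (xc + ε/2), D z < γc := by
    intro z hz
    apply hε
    rw [Real.dist_eq, abs_lt]
    constructor <;> [linarith [hz.1]; linarith [hz.2]]
  have := Convex.norm_image_sub_le_of_norm_hasDerivWithin_le
    (f := mc c) (f' := fun z => c * (_root_.sigmoid (c * z) * (1 - _root_.sigmoid (c * z))))
    (s := Set.Icc (xc - ε/2) (xc + ε/2)) (C := γc)
    (fun z _ => (hasDerivAt_mc c z).hasDerivWithinAt)
    (fun z hz => by
      rw [Real.norm_eq_abs, abs_mul, abs_of_nonneg (sigmoid_deriv_nonneg _)]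
      exact (hsub z hz).le)
    (convex_Icc _ _) hy hx
  simpa [Real.norm_eq_abs] using this

/-- f_{c,n}(x; u) = n⁻¹ Σᵢ 1_{[0, m_c(x)]}(uᵢ). -/
noncomputable def fcn (c : ℝ) (n : ℕ) (x : ℝ) (u : Fin n → ℝ) : ℝ :=
  (1 / n) * ∑ i, if u i ∈ Set.Icc (0:ℝ) (mc c x) then (1:ℝ) else 0

/-- The law of a vector of n i.i.d. Uniform(0,1) random variables. -/
noncomputable def unifCube (n : ℕ) : Measure (Fin n → ℝ) :=
  Measure.pi fun _ => volume.restrict (Set.Icc (0:ℝ) 1)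

instance unifSeg_prob : IsProbabilityMeasure (volume.restrict (Set.Icc (0:ℝ) 1)) := by
  constructor
  rw [Measure.restrict_apply_univ, Real.volume_Icc]
  norm_num

instance unifCube_prob (n : ℕ) : IsProbabilityMeasure (unifCube n) := by
  unfold unifCube; infer_instance

def cylSet (n : ℕ) (i : Fin n) (b : ℝ) : Set (Fin n → ℝ) :=
  {u : Fin n → ℝ | u i ∈ Set.Icc (0:ℝ) b}

lemma cylSet_measurable (n : ℕ) (i : Fin n) (b : ℝ) : MeasurableSet (cylSet n i b) :=
  (show Measurable (fun u : Fin n → ℝ => u i) from measurable_pi_apply i) measurableSet_Icc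

lemma unifCube_cyl (n : ℕ) (i : Fin n) (b : ℝ) :
    unifCube n (cylSet n i b) = (volume.restrict (Set.Icc (0:ℝ) 1)) (Set.Icc (0:ℝ) b) := by
  have h : cylSet n i b
      = Set.pi Set.univ (Function.update (fun _ : Fin n => (Set.univ : Set ℝ)) i
          (Set.Icc (0:ℝ) b)) :=
    (Set.univ_pi_update_univ i _).symm
  rw [h, unifCube, Measure.pi_pi]
  rw [Finset.prod_eq_single i (fun j _ hj => by simp [Function.update_of_ne hj])
    (fun h => absurd (Finset.mem_univ i) h)]
  simp

lemma ind_eq_indicator (n : ℕ) (i : Fin n) (b : ℝ) :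
    (fun u : Fin n → ℝ => if u i ∈ Set.Icc (0:ℝ) b then (1:ℝ) else 0)
      = Set.indicator (cylSet n i b) (fun _ => (1:ℝ)) := by
  ext u
  simp [Set.indicator_apply, cylSet, Set.mem_setOf_eq]

lemma integrable_ind (n : ℕ) (i : Fin n) (b : ℝ) :
    Integrable (fun u : Fin n → ℝ => if u i ∈ Set.Icc (0:ℝ) b then (1:ℝ) else 0)
      (unifCube n) := by
  rw [ind_eq_indicator, integrable_indicator_iff (cylSet_measurable n i b)]
  exact integrableOn_const (measure_ne_top _ _)

lemma integral_ind (n : ℕ) (i : Fin n) (b : ℝ) (hb : b ∈ Set.Icc (0:ℝ) 1) :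
    ∫ u, (if u i ∈ Set.Icc (0:ℝ) b then (1:ℝ) else 0) ∂(unifCube n) = b := by
  rw [ind_eq_indicator,
    MeasureTheory.integral_indicator_const (1:ℝ) (cylSet_measurable n i b), smul_eq_mul, mul_one]
  rw [measureReal_def, unifCube_cyl n i b]
  rw [Measure.restrict_apply measurableSet_Icc]
  have h2 : Set.Icc (0:ℝ) b ∩ Set.Icc (0:ℝ) 1 = Set.Icc (0:ℝ) b :=
    Set.inter_eq_self_of_subset_left (Set.Icc_subset_Icc le_rfl hb.2)
  rw [h2, Real.volume_Icc, ENNReal.toReal_ofReal (by linarith [hb.1])]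
  ring

lemma integrable_fcn (c : ℝ) (n : ℕ) (x : ℝ) : Integrable (fcn c n x) (unifCube n) := by
  unfold fcn
  apply Integrable.const_mul
  exact integrable_finset_sum _ (fun i _ => integrable_ind n i (mc c x))

lemma integral_fcn (c : ℝ) (n : ℕ) (hn : 0 < n) (x : ℝ) :
    ∫ u, fcn c n x u ∂(unifCube n) = mc c x := by
  unfold fcn
  rw [MeasureTheory.integral_const_mul]
  rw [MeasureTheory.integral_finset_sum _ (fun i _ => integrable_ind n i (mc c x))]
  have hb : mc c x ∈ Set.Icc (0:ℝ) 1 :=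
    ⟨(_root_.sigmoid_pos _).le, (_root_.sigmoid_lt_one _).le⟩
  rw [Finset.sum_congr rfl (fun i _ => integral_ind n i (mc c x) hb)]
  rw [Finset.sum_const, Finset.card_univ, Fintype.card_fin, nsmul_eq_mul]
  field_simp

lemma integral_abs_fcn_eq (c : ℝ) (n : ℕ) (hn : 0 < n) (x y : ℝ) (h : mc c x ≤ mc c y) :
    ∫ u, |fcn c n x u - fcn c n y u| ∂(unifCube n) = mc c y - mc c x := by
  have hpt : ∀ u : Fin n → ℝ, fcn c n x u ≤ fcn c n y u := by
    intro u
    unfold fcn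
    apply mul_le_mul_of_nonneg_left _ (by positivity)
    apply Finset.sum_le_sum
    intro i _
    by_cases hmem : u i ∈ Set.Icc (0:ℝ) (mc c x)
    · rw [if_pos hmem, if_pos ⟨hmem.1, hmem.2.trans h⟩]
    · rw [if_neg hmem]
      split <;> norm_num
  have heq : (fun u => |fcn c n x u - fcn c n y u|)
      = fun u => fcn c n y u - fcn c n x u := by
    ext u
    rw [abs_sub_comm, abs_of_nonneg (sub_nonneg.2 (hpt u))]
  rw [heq, MeasureTheory.integral_sub (integrable_fcn c n y) (integrable_fcn c n x)]
  rw [integral_fcn c n hn y, integral_fcn c n hn x]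

lemma integral_abs_fcn_le (c : ℝ) (n : ℕ) (hn : 0 < n) (x y : ℝ) :
    ∫ u, |fcn c n x u - fcn c n y u| ∂(unifCube n) ≤ |mc c x - mc c y| := by
  rcases le_total (mc c x) (mc c y) with h | h
  · rw [integral_abs_fcn_eq c n hn x y h, abs_sub_comm, abs_of_nonneg (sub_nonneg.2 h)]
  · have : (fun u => |fcn c n x u - fcn c n y u|) = fun u => |fcn c n y u - fcn c n x u| := by
      ext u; rw [abs_sub_comm]
    rw [this, integral_abs_fcn_eq c n hn y x h, abs_of_nonneg (sub_nonneg.2 h)]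

/-- Contraction estimate for the coupling when c > c⋆. -/
theorem coupling_contraction (xs c xc : ℝ)
    (hxs : 0 < xs ∧ xs * Real.exp xs / (1 + Real.exp xs) = 1)
    (hc : c > -1 - xs - Real.exp xs)
    (hxc : xc ∈ Set.Icc (0:ℝ) 1 ∧ mc c xc = xc) :
    ∃ εc > (0:ℝ), ∃ γc : ℝ, 0 ≤ γc ∧ γc < 1 ∧
      ∀ n : ℕ, 0 < n → ∀ i i' : Fin (n + 1),
        (∫ u, |fcn c n (((i:ℕ):ℝ)/n) u - fcn c n (((i':ℕ):ℝ)/n) u| ∂(unifCube n))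
          ≤ (|c| / 4) * |((i:ℕ):ℝ)/n - ((i':ℕ):ℝ)/n| ∧
        (((i:ℕ):ℝ)/n ∈ Set.Icc (xc - εc) (xc + εc) →
         ((i':ℕ):ℝ)/n ∈ Set.Icc (xc - εc) (xc + εc) →
          (∫ u, |fcn c n (((i:ℕ):ℝ)/n) u - fcn c n (((i':ℕ):ℝ)/n) u| ∂(unifCube n))
            ≤ min (|c| / 4) γc * |((i:ℕ):ℝ)/n - ((i':ℕ):ℝ)/n|) := by
  obtain ⟨εc, hε, γc, hγ0, hγ1, hlip⟩ := exists_eps_gamma xs c xc hxs hc hxc.2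
  refine ⟨εc, hε, γc, hγ0, hγ1, fun n hn i i' => ?_⟩
  set x : ℝ := ((i:ℕ):ℝ)/n with hxdef
  set x' : ℝ := ((i':ℕ):ℝ)/n with hx'def
  have h1 : (∫ u, |fcn c n x u - fcn c n x' u| ∂(unifCube n)) ≤ |mc c x - mc c x'| :=
    integral_abs_fcn_le c n hn x x'
  refine ⟨h1.trans (mc_lipschitz c x x'), fun hx hx' => ?_⟩
  have h2 : |mc c x - mc c x'| ≤ γc * |x - x'| := hlip x x' hx hx'
  rcases le_total (|c| / 4) γc with h | h
  · rw [min_eq_left h]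
    exact h1.trans (mc_lipschitz c x x')
  · rw [min_eq_right h]
    exact h1.trans h2
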